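/- X³_{α,θ} = ⋃_{k=0}^{p-1} (e^{iθ})^k K³_{α,θ}, where K³_{α,θ} is the attractor of the IFS {ψ₁(z) = αz, ψ₂(z) = α e^{iθ}·z̄ + α} and X³_{α,θ} = { Σ_{n≥1} δₙ ∏_{j=1}^n ξⱼ : (δₙ) ∈ W^A_θ }. -/

import Mathlib

open Complex

/-- e^{iθ} -/
noncomputable def rot (θ : ℝ) : ℂ := Complex.exp (θ * Complex.I)

/-- The digit set Δ_θ = {0, 1, e^{iθ}, …, e^{(p-1)iθ}}. -/
def Delta (θ : ℝ) (p : ℕ) : Set ℂ := insert 0 {z | ∃ k, k < p ∧ z = rot θ ^ k}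

open scoped Classical in
/-- N_j : the number of nonzero digits among positions 1,…,j. -/
noncomputable def Ncount (δ : ℕ → ℂ) (j : ℕ) : ℕ :=
  ((Finset.Icc 1 j).filter (fun m => δ m ≠ 0)).card

/-- Alternating Condition: each nonzero digit equals e^{+iθ} times the previous nonzero
digit δ_{j₀} if the count N_{j₀} of nonzero digits up to j₀ is odd, and e^{-iθ} times it
if N_{j₀} is even. Sequences are indexed from 1; index 0 is a dummy (digit 0). -/
def AC (θ : ℝ) (δ : ℕ → ℂ) : Prop :=
  ∀ j k : ℕ, j < k → δ j ≠ 0 → δ k ≠ 0 → (∀ m, j < m → m < k → δ m = 0) →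
    δ k = (if Odd (Ncount δ j) then rot θ else (rot θ)⁻¹) * δ j

/-- Membership in W^A_θ (with the convention δ 0 = 0, i.e. sequences start at index 1). -/
def Walt (θ : ℝ) (p : ℕ) (δ : ℕ → ℂ) : Prop :=
  δ 0 = 0 ∧ (∀ n, δ n ∈ Delta θ p) ∧ AC θ δ

/-- The first nonzero digit of δ is c (or δ is identically zero). -/
def FirstNonzero (δ : ℕ → ℂ) (c : ℂ) : Prop :=
  (∀ n, δ n = 0) ∨ ∃ j, δ j = c ∧ ∀ m, m < j → δ m = 0

/-- The weights ξ: ξ₁ = α and ξ_{j+1} = ξ_j if δ_j = 0, conj ξ_j otherwise. -/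
noncomputable def xi (α : ℂ) (δ : ℕ → ℂ) : ℕ → ℂ
  | 0 => α
  | j + 1 => if δ j = 0 then xi α δ j else starRingEnd ℂ (xi α δ j)

/-- X³₁ : points from alternating sequences with first nonzero digit 1. -/
noncomputable def X3one (α : ℂ) (θ : ℝ) (p : ℕ) : Set ℂ :=
  {x | ∃ δ : ℕ → ℂ, Walt θ p δ ∧ FirstNonzero δ 1 ∧
    x = ∑' n, δ n * ∏ j ∈ Finset.Icc 1 n, xi α δ j}

/-- X³_{α,θ} : points from all alternating sequences. -/
noncomputable def X3full (α : ℂ) (θ : ℝ) (p : ℕ) : Set ℂ :=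
  {x | ∃ δ : ℕ → ℂ, Walt θ p δ ∧
    x = ∑' n, δ n * ∏ j ∈ Finset.Icc 1 n, xi α δ j}

/-! An alternating sequence whose first nonzero digit is `1` is determined by the positions of
its nonzero digits: these digits are forced to read `1, e^{iθ}, 1, e^{iθ}, …`. Such sequences
are therefore coded by `c : ℕ → Bool`, and stripping the first position of the code turns the
expansion `x` into `x'` with `x = ψ₁ x'` (digit `0`) or `x = ψ₂ x'` (digit `1`). A coding map of
a contracting IFS with bounded range has the attractor as its range, so the expansions with
first nonzero digit `1` form exactly `K`. Multiplying a sequence by a power of `e^{iθ}` preserves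
the alternating condition, which accounts for the other first digits. -/

open ComplexConjugate Metric Set Bornology

section Coding

lemma exists_address_of_subset_iUnion {X ι : Type*} {f : ι → X → X} {K : Set X}
    (hK : K ⊆ ⋃ i, f i '' K) {x : X} (hx : x ∈ K) :
    ∃ (c : ℕ → ι) (z : ℕ → X), z 0 = x ∧ (∀ m, z m ∈ K) ∧ ∀ m, z m = f (c m) (z (m + 1)) := by
  have hstep : ∀ y : K, ∃ iw : ι × K, (y : X) = f iw.1 iw.2 := by
    rintro ⟨y, hy⟩
    obtain ⟨i, w, hw, rfl⟩ := mem_iUnion.1 (hK hy)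
    exact ⟨(i, ⟨w, hw⟩), rfl⟩
  choose next hnext using hstep
  let z : ℕ → K := fun n => (Prod.snd ∘ next)^[n] ⟨x, hx⟩
  refine ⟨fun m => (next (z m)).1, fun m => z m, rfl, fun m => (z m).2, fun m => ?_⟩
  simp only [z, Function.iterate_succ_apply', Function.comp_apply]
  exact hnext _

variable {X ι : Type*} [MetricSpace X] {f : ι → X → X} {r : NNReal} {K : Set X}
  {π : (ℕ → ι) → X}

lemma nonpos_of_forall_le_pow_mul {a D r : ℝ} (hr₀ : 0 ≤ r) (hr : r < 1)
    (h : ∀ n : ℕ, a ≤ r ^ n * D) : a ≤ 0 := by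
  have hlim := (tendsto_pow_atTop_nhds_zero_of_lt_one hr₀ hr).mul_const D
  rw [zero_mul] at hlim
  exact ge_of_tendsto' hlim h

lemma LipschitzWith.infDist_le_mul {g : X → X} (hg : LipschitzWith r g) (hgK : MapsTo g K K)
    (hK : IsCompact K) (hne : K.Nonempty) (x : X) : infDist (g x) K ≤ r * infDist x K := by
  obtain ⟨y, hy, hxy⟩ := hK.exists_infDist_eq_dist hne x
  calc infDist (g x) K ≤ dist (g x) (g y) := infDist_le_dist_of_mem (hgK hy)
    _ ≤ r * dist x y := hg.dist_le_mul x y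
    _ = r * infDist x K := by rw [hxy]

lemma range_subset_of_coding (hr : r < 1) (hf : ∀ i, LipschitzWith r (f i))
    (hK : K = ⋃ i, f i '' K) (hKc : IsCompact K) (hne : K.Nonempty)
    (hπ : ∀ c, π c = f (c 0) (π fun n => c (n + 1))) (hπb : IsBounded (range π)) :
    range π ⊆ K := by
  obtain ⟨x₀, hx₀⟩ := hne
  obtain ⟨C, hC⟩ := isBounded_iff.1 (hπb.union hKc.isBounded)
  have hfK : ∀ i, MapsTo (f i) K K := fun i x hx => by
    rw [hK]; exact mem_iUnion_of_mem i (mem_image_of_mem _ hx)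
  have hcontract : ∀ n c, infDist (π c) K ≤ r ^ n * C := by
    intro n
    induction n with
    | zero =>
      intro c
      simpa using (infDist_le_dist_of_mem hx₀).trans (hC (.inl ⟨c, rfl⟩) (.inr hx₀))
    | succ n ih =>
      intro c
      calc infDist (π c) K ≤ r * infDist (π fun n => c (n + 1)) K := by
            rw [hπ c]; exact (hf _).infDist_le_mul (hfK _) hKc ⟨x₀, hx₀⟩ _
        _ ≤ r * (r ^ n * C) := by gcongr; exact ih _
        _ = r ^ (n + 1) * C := by ring
  rintro _ ⟨c, rfl⟩
  refine (hKc.isClosed.mem_iff_infDist_zero ⟨x₀, hx₀⟩).2 (le_antisymm ?_ infDist_nonneg)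
  exact nonpos_of_forall_le_pow_mul r.2 (by exact_mod_cast hr) fun n => hcontract n c

lemma subset_range_of_coding (hr : r < 1) (hf : ∀ i, LipschitzWith r (f i))
    (hK : K ⊆ ⋃ i, f i '' K) (hKb : IsBounded K)
    (hπ : ∀ c, π c = f (c 0) (π fun n => c (n + 1))) (hπb : IsBounded (range π)) :
    K ⊆ range π := by
  obtain ⟨C, hC⟩ := isBounded_iff.1 (hπb.union hKb)
  have hcontract : ∀ n (c : ℕ → ι) (z : ℕ → X), (∀ m, z m ∈ K) →
      (∀ m, z m = f (c m) (z (m + 1))) → dist (z 0) (π c) ≤ r ^ n * C := by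
    intro n
    induction n with
    | zero => intro c z hzK _; simpa using hC (.inr (hzK 0)) (.inl ⟨c, rfl⟩)
    | succ n ih =>
      intro c z hzK hz
      calc dist (z 0) (π c) ≤ r * dist (z 1) (π fun n => c (n + 1)) := by
            rw [hz 0, hπ c]; exact (hf _).dist_le_mul _ _
        _ ≤ r * (r ^ n * C) := by
            gcongr; exact ih _ (fun m => z (m + 1)) (fun m => hzK _) (fun m => hz _)
        _ = r ^ (n + 1) * C := by ring
  intro x hx
  obtain ⟨c, z, rfl, hzK, hz⟩ := exists_address_of_subset_iUnion hK hx
  refine ⟨c, (dist_le_zero.1 ?_).symm⟩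
  exact nonpos_of_forall_le_pow_mul r.2 (by exact_mod_cast hr) fun n => hcontract n c z hzK hz

theorem range_eq_of_coding (hr : r < 1) (hf : ∀ i, LipschitzWith r (f i))
    (hK : K = ⋃ i, f i '' K) (hKc : IsCompact K) (hne : K.Nonempty)
    (hπ : ∀ c, π c = f (c 0) (π fun n => c (n + 1))) (hπb : IsBounded (range π)) :
    range π = K :=
  (range_subset_of_coding hr hf hK hKc hne hπ hπb).antisymm
    (subset_range_of_coding hr hf hK.subset hKc.isBounded hπ hπb)

end Coding

section Rotation

variable {θ : ℝ} {p : ℕ}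

lemma norm_rot (θ : ℝ) : ‖rot θ‖ = 1 := by
  simp [rot, Complex.norm_exp]

lemma rot_ne_zero (θ : ℝ) : rot θ ≠ 0 := Complex.exp_ne_zero _

lemma conj_rot (θ : ℝ) : conj (rot θ) = (rot θ)⁻¹ := by
  rw [rot, ← Complex.exp_conj, ← Complex.exp_neg]
  simp [Complex.conj_ofReal]

lemma rot_mul_conj_rot (θ : ℝ) : rot θ * conj (rot θ) = 1 := by
  rw [conj_rot, mul_inv_cancel₀ (rot_ne_zero θ)]

lemma rot_pow_eq_one {q : ℤ} (hp : 0 < p) (hθ : θ = 2 * Real.pi * q / p) : rot θ ^ p = 1 := by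
  have hp' : (p : ℂ) ≠ 0 := Nat.cast_ne_zero.mpr hp.ne'
  rw [rot, ← Complex.exp_nat_mul,
    show (p : ℂ) * (θ * Complex.I) = q * (2 * Real.pi * Complex.I) by rw [hθ]; push_cast; field_simp,
    Complex.exp_int_mul_two_pi_mul_I]

lemma rot_zpow_mem_Delta (hp : 0 < p) (hrp : rot θ ^ p = 1) (m : ℤ) : rot θ ^ m ∈ Delta θ p := by
  have hp' : (0 : ℤ) < p := by exact_mod_cast hp
  have hlt := Int.emod_lt_of_pos m hp'
  have hnn := Int.emod_nonneg m hp'.ne'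
  refine Or.inr ⟨(m % p).toNat, by omega, ?_⟩
  calc rot θ ^ m = (rot θ ^ (p : ℤ)) ^ (m / p) * rot θ ^ (m % p) := by
        rw [← zpow_mul, ← zpow_add₀ (rot_ne_zero θ), Int.mul_ediv_add_emod]
    _ = rot θ ^ (m % p).toNat := by
        rw [zpow_natCast, hrp, one_zpow, one_mul, ← zpow_natCast, Int.toNat_of_nonneg hnn]

lemma rot_zpow_mul_mem_Delta (hp : 0 < p) (hrp : rot θ ^ p = 1) (m : ℤ) {z : ℂ}
    (hz : z ∈ Delta θ p) : rot θ ^ m * z ∈ Delta θ p := by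
  rcases hz with rfl | ⟨k, -, rfl⟩
  · rw [mul_zero]; exact mem_insert 0 _
  · rw [← zpow_natCast, ← zpow_add₀ (rot_ne_zero θ)]
    exact rot_zpow_mem_Delta hp hrp _

end Rotation

section Expansion

variable {α : ℂ} {δ δ' : ℕ → ℂ}

lemma xi_one_of_eq_zero (h : δ 0 = 0) : xi α δ 1 = α := by
  simp [xi, h]

lemma xi_one_of_ne_zero (h : δ 0 ≠ 0) : xi α δ 1 = conj α := by
  simp [xi, h]

lemma norm_xi (α : ℂ) (δ : ℕ → ℂ) (j : ℕ) : ‖xi α δ j‖ = ‖α‖ := by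
  induction j with
  | zero => rfl
  | succ j ih => simp only [xi]; split_ifs <;> simp [ih]

lemma xi_congr (h : ∀ m, δ m = 0 ↔ δ' m = 0) : xi α δ = xi α δ' := by
  funext j
  induction j with
  | zero => rfl
  | succ j ih => simp only [xi, ih, h j]

lemma xi_conj (α : ℂ) (δ : ℕ → ℂ) (j : ℕ) : xi (conj α) δ j = conj (xi α δ j) := by
  induction j with
  | zero => rfl
  | succ j ih => simp only [xi, ih]; split_ifs <;> rfl

lemma xi_succ (α : ℂ) (δ : ℕ → ℂ) (j : ℕ) :
    xi α δ (j + 1) = xi (xi α δ 1) (fun n => δ (n + 1)) j := by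
  induction j with
  | zero => rfl
  | succ j ih => rw [xi, ih]; rfl

lemma Finset.prod_Icc_one_succ {M : Type*} [CommMonoid M] (g : ℕ → M) (n : ℕ) :
    ∏ j ∈ Finset.Icc 1 (n + 1), g j = g 1 * ∏ j ∈ Finset.Icc 1 n, g (j + 1) := by
  induction n with
  | zero => simp
  | succ n ih => rw [Finset.prod_Icc_succ_top (by omega), ih, Finset.prod_Icc_succ_top (by omega),
      mul_assoc]

noncomputable def expansion (α : ℂ) (δ : ℕ → ℂ) : ℂ :=
  ∑' n, δ n * ∏ j ∈ Finset.Icc 1 n, xi α δ j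

lemma norm_expansion_term_le (hδ : ∀ n, ‖δ n‖ ≤ 1) (n : ℕ) :
    ‖δ n * ∏ j ∈ Finset.Icc 1 n, xi α δ j‖ ≤ ‖α‖ ^ n := by
  rw [norm_mul, norm_prod]
  simp only [norm_xi, Finset.prod_const, Nat.card_Icc, Nat.add_sub_cancel]
  exact mul_le_of_le_one_left (by positivity) (hδ n)

lemma summable_expansion (hα : ‖α‖ < 1) (hδ : ∀ n, ‖δ n‖ ≤ 1) :
    Summable fun n => δ n * ∏ j ∈ Finset.Icc 1 n, xi α δ j :=
  .of_norm_bounded (summable_geometric_of_lt_one (norm_nonneg α) hα) (norm_expansion_term_le hδ)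

lemma norm_expansion_le (hα : ‖α‖ < 1) (hδ : ∀ n, ‖δ n‖ ≤ 1) :
    ‖expansion α δ‖ ≤ (1 - ‖α‖)⁻¹ :=
  tsum_of_norm_bounded (hasSum_geometric_of_lt_one (norm_nonneg α) hα) (norm_expansion_term_le hδ)

/-- The empty product at index `0` makes the tail an expansion in its own right, with weight
`ξ₁` in place of `α`. -/
lemma expansion_eq_add_mul_tail (hα : ‖α‖ < 1) (hδ : ∀ n, ‖δ n‖ ≤ 1) :
    expansion α δ = δ 0 + xi α δ 1 * expansion (xi α δ 1) (fun n => δ (n + 1)) := by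
  rw [expansion, (summable_expansion hα hδ).tsum_eq_zero_add, expansion, ← tsum_mul_left]
  congr 1
  · simp
  · refine tsum_congr fun n => ?_
    rw [Finset.prod_Icc_one_succ, Finset.prod_congr rfl fun j _ => xi_succ α δ j]
    ring

lemma expansion_eq_mul_tail (hα : ‖α‖ < 1) (hδ : ∀ n, ‖δ n‖ ≤ 1) (h0 : δ 0 = 0) :
    expansion α δ = α * expansion α (fun n => δ (n + 1)) := by
  rw [expansion_eq_add_mul_tail hα hδ, h0, xi_one_of_eq_zero h0, zero_add]

lemma expansion_const_mul {u : ℂ} (hu : u ≠ 0) (α : ℂ) (δ : ℕ → ℂ) :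
    expansion α (fun n => u * δ n) = u * expansion α δ := by
  rw [expansion, expansion, ← tsum_mul_left,
    xi_congr (δ' := δ) fun m => by rw [mul_eq_zero, or_iff_right hu]]
  exact tsum_congr fun n => mul_assoc _ _ _

lemma expansion_conj (α : ℂ) (δ : ℕ → ℂ) :
    expansion (conj α) (fun n => conj (δ n)) = conj (expansion α δ) := by
  rw [expansion, expansion, Complex.conj_tsum, xi_congr (δ' := δ) fun m => map_eq_zero _]
  simp only [xi_conj, map_mul, map_prod]

end Expansion

section Ncount

variable {δ δ' : ℕ → ℂ} {j k n : ℕ}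

lemma Ncount_zero (δ : ℕ → ℂ) : Ncount δ 0 = 0 := by
  simp [Ncount]

lemma Ncount_succ_of_eq_zero (h : δ (n + 1) = 0) : Ncount δ (n + 1) = Ncount δ n := by
  rw [Ncount, ← Finset.insert_Icc_right_eq_Icc_add_one (by omega), Finset.filter_insert,
    if_neg (not_not.2 h), Ncount]

lemma Ncount_succ_of_ne_zero (h : δ (n + 1) ≠ 0) : Ncount δ (n + 1) = Ncount δ n + 1 := by
  rw [Ncount, ← Finset.insert_Icc_right_eq_Icc_add_one (by omega), Finset.filter_insert,
    if_pos h, Finset.card_insert_of_notMem (by simp), Ncount]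

lemma Ncount_congr (h : ∀ m, δ m = 0 ↔ δ' m = 0) : Ncount δ = Ncount δ' := by
  funext n
  unfold Ncount
  congr 1
  exact Finset.filter_congr fun m _ => by rw [ne_eq, h m]

lemma Ncount_eq_of_forall_eq_zero (hjk : j ≤ k) (h : ∀ m, j < m → m ≤ k → δ m = 0) :
    Ncount δ k = Ncount δ j := by
  induction k, hjk using Nat.le_induction with
  | base => rfl
  | succ k hjk ih =>
    rw [Ncount_succ_of_eq_zero (h _ (by omega) le_rfl)]
    exact ih fun m h₁ h₂ => h m h₁ (by omega)

lemma Ncount_eq_add_one (hjk : j < k) (hk : δ k ≠ 0) (hbet : ∀ m, j < m → m < k → δ m = 0) :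
    Ncount δ k = Ncount δ j + 1 := by
  obtain ⟨l, rfl⟩ : ∃ l, k = l + 1 := ⟨k - 1, by omega⟩
  rw [Ncount_succ_of_ne_zero hk,
    Ncount_eq_of_forall_eq_zero (by omega) fun m h₁ h₂ => hbet m h₁ (by omega)]

end Ncount

section NormalForm

variable {θ : ℝ} {p : ℕ} {δ δ' : ℕ → ℂ}

/-- The `m`-th nonzero digit of any alternating sequence whose first nonzero digit is `1`. -/
noncomputable def altDigit (θ : ℝ) (m : ℕ) : ℂ := if Odd m then 1 else rot θ

lemma altDigit_ne_zero (θ : ℝ) (m : ℕ) : altDigit θ m ≠ 0 := by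
  unfold altDigit; split_ifs
  exacts [one_ne_zero, rot_ne_zero θ]

lemma norm_altDigit (θ : ℝ) (m : ℕ) : ‖altDigit θ m‖ = 1 := by
  unfold altDigit; split_ifs
  exacts [norm_one, norm_rot θ]

lemma altDigit_one (θ : ℝ) : altDigit θ 1 = 1 := if_pos odd_one

lemma altDigit_succ (θ : ℝ) (m : ℕ) :
    altDigit θ (m + 1) = (if Odd m then rot θ else (rot θ)⁻¹) * altDigit θ m := by
  rcases Nat.even_or_odd m with hm | hm
  · simp [altDigit, hm.add_one, Nat.not_odd_iff_even.2 hm, rot_ne_zero]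
  · simp [altDigit, hm, Nat.not_odd_iff_even.2 hm.add_one]

lemma altDigit_succ_eq_rot_mul_conj (θ : ℝ) (m : ℕ) :
    altDigit θ (m + 1) = rot θ * conj (altDigit θ m) := by
  rcases Nat.even_or_odd m with hm | hm
  · simp [altDigit, hm.add_one, Nat.not_odd_iff_even.2 hm, rot_mul_conj_rot]
  · simp [altDigit, hm, Nat.not_odd_iff_even.2 hm.add_one]

lemma altDigit_mem_Delta (hp : 0 < p) (hrp : rot θ ^ p = 1) (m : ℕ) : altDigit θ m ∈ Delta θ p := by
  unfold altDigit; split_ifs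
  exacts [by simpa using rot_zpow_mem_Delta hp hrp 0, by simpa using rot_zpow_mem_Delta hp hrp 1]

def AltNormalForm (θ : ℝ) (δ : ℕ → ℂ) : Prop :=
  ∀ n, δ n ≠ 0 → δ n = altDigit θ (Ncount δ n)

lemma AltNormalForm.ac (h : AltNormalForm θ δ) : AC θ δ := by
  intro j k hjk hj hk hbet
  rw [h k hk, h j hj, Ncount_eq_add_one hjk hk hbet, altDigit_succ]

lemma AltNormalForm.firstNonzero_one (h : AltNormalForm θ δ) (h0 : δ 0 = 0) :
    FirstNonzero δ 1 := by
  classical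
  by_cases hex : ∃ n, δ n ≠ 0
  · have hbefore : ∀ m < Nat.find hex, δ m = 0 := fun m hm => not_not.1 (Nat.find_min hex hm)
    have hpos : 0 < Nat.find hex := Nat.pos_of_ne_zero fun h' => Nat.find_spec hex (h' ▸ h0)
    refine .inr ⟨Nat.find hex, ?_, hbefore⟩
    rw [h _ (Nat.find_spec hex), Ncount_eq_add_one hpos (Nat.find_spec hex)
      (fun m _ hm => hbefore m hm), Ncount_zero, altDigit_one]
  · push Not at hex
    exact .inl hex

lemma AltNormalForm.ext (h : AltNormalForm θ δ) (h' : AltNormalForm θ δ')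
    (hz : ∀ n, δ n = 0 ↔ δ' n = 0) : δ = δ' := by
  funext n
  by_cases hn : δ n = 0
  · rw [hn, ((hz n).1 hn)]
  · rw [h n hn, h' n (fun h'' => hn ((hz n).2 h'')), Ncount_congr hz]

lemma Nat.exists_greatest_lt {P : ℕ → Prop} [DecidablePred P] {n : ℕ} (h : ∃ j < n, P j) :
    ∃ j < n, P j ∧ ∀ m, j < m → m < n → ¬ P m := by
  obtain ⟨j, hjn, hj⟩ := h
  refine ⟨Nat.findGreatest P (n - 1), ?_, Nat.findGreatest_spec (m := j) (by omega) hj,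
    fun m h₁ h₂ => Nat.findGreatest_is_greatest h₁ (by omega)⟩
  have := Nat.findGreatest_le (P := P) (n - 1)
  omega

lemma altNormalForm_of_walt (hw : Walt θ p δ) (hfn : FirstNonzero δ 1) : AltNormalForm θ δ := by
  classical
  intro n
  induction n using Nat.strong_induction_on with
  | _ n ih =>
  intro hn
  by_cases hprev : ∃ j < n, δ j ≠ 0
  · obtain ⟨j, hjn, hj, hbet⟩ := Nat.exists_greatest_lt hprev
    simp only [not_not] at hbet
    rw [hw.2.2 j n hjn hj hn hbet, ih j hjn hj, Ncount_eq_add_one hjn hn hbet, altDigit_succ]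
  · push Not at hprev
    have hpos : 0 < n := Nat.pos_of_ne_zero fun h => hn (h ▸ hw.1)
    rw [Ncount_eq_add_one hpos hn fun m _ hm => hprev m hm, Ncount_zero, altDigit_one]
    rcases hfn with hall | ⟨j, hj, hbefore⟩
    · exact absurd (hall n) hn
    · rcases lt_trichotomy j n with hjn | rfl | hnj
      · exact absurd (hprev j hjn) (hj ▸ one_ne_zero)
      · exact hj
      · exact absurd (hbefore n hnj) hn

end NormalForm

section Code

variable {θ : ℝ} {p : ℕ} {c : ℕ → Bool}

noncomputable def codeDigits (θ : ℝ) (c : ℕ → Bool) : ℕ → ℂ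
  | 0 => 0
  | n + 1 => if c n then altDigit θ (Nat.count (fun m => c m) (n + 1)) else 0

lemma codeDigits_succ_ne_zero_iff {n : ℕ} : codeDigits θ c (n + 1) ≠ 0 ↔ c n = true := by
  by_cases h : c n <;> simp [codeDigits, h, altDigit_ne_zero]

lemma norm_codeDigits_le (θ : ℝ) (c : ℕ → Bool) (n : ℕ) : ‖codeDigits θ c n‖ ≤ 1 := by
  cases n with
  | zero => simp [codeDigits]
  | succ n => simp only [codeDigits]; split_ifs <;> simp [norm_altDigit]

lemma Ncount_codeDigits (n : ℕ) :
    Ncount (codeDigits θ c) n = Nat.count (fun m => c m) n := by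
  induction n with
  | zero => rw [Ncount_zero, Nat.count_zero]
  | succ n ih =>
    rw [Nat.count_succ, ← ih]
    by_cases h : c n
    · rw [Ncount_succ_of_ne_zero (codeDigits_succ_ne_zero_iff.2 h), if_pos h]
    · rw [Ncount_succ_of_eq_zero (not_not.1 (mt codeDigits_succ_ne_zero_iff.1 h)), if_neg h,
        add_zero]

lemma altNormalForm_codeDigits (θ : ℝ) (c : ℕ → Bool) : AltNormalForm θ (codeDigits θ c) := by
  rintro (_ | n) hn
  · exact absurd rfl hn
  · rw [Ncount_codeDigits]
    simp [codeDigits, codeDigits_succ_ne_zero_iff.1 hn]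

lemma AltNormalForm.eq_codeDigits {δ : ℕ → ℂ} (h : AltNormalForm θ δ) (h0 : δ 0 = 0) :
    δ = codeDigits θ fun n => decide (δ (n + 1) ≠ 0) := by
  refine h.ext (altNormalForm_codeDigits θ _) fun n => ?_
  cases n with
  | zero => simp [h0, codeDigits]
  | succ n => rw [← not_iff_not, ← ne_eq, ← ne_eq, codeDigits_succ_ne_zero_iff, decide_eq_true_iff]

lemma walt_codeDigits (hp : 0 < p) (hrp : rot θ ^ p = 1) (c : ℕ → Bool) :
    Walt θ p (codeDigits θ c) := by
  refine ⟨rfl, fun n => ?_, (altNormalForm_codeDigits θ c).ac⟩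
  cases n with
  | zero => exact mem_insert 0 _
  | succ n =>
    simp only [codeDigits]; split_ifs
    exacts [altDigit_mem_Delta hp hrp _, mem_insert 0 _]

lemma codeDigits_succ_of_false (hc : c 0 = false) :
    (fun n => codeDigits θ c (n + 1)) = codeDigits θ fun n => c (n + 1) := by
  funext n
  cases n with
  | zero => simp [codeDigits, hc]
  | succ n => simp [codeDigits, Nat.count_succ' _ (n + 1), hc]

lemma codeDigits_one_of_true (hc : c 0 = true) : codeDigits θ c 1 = 1 := by
  simp [codeDigits, hc, Nat.count_one, altDigit_one]

lemma codeDigits_add_two_of_true (hc : c 0 = true) (n : ℕ) :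
    codeDigits θ c (n + 1 + 1) = rot θ * conj (codeDigits θ (fun n => c (n + 1)) (n + 1)) := by
  simp only [codeDigits, Nat.count_succ' _ (n + 1), hc, if_true]
  split_ifs
  · exact altDigit_succ_eq_rot_mul_conj θ _
  · simp

/-- The maps `ψ₁` (`false`) and `ψ₂` (`true`). -/
noncomputable def psi (α : ℂ) (θ : ℝ) : Bool → ℂ → ℂ
  | false, z => α * z
  | true, z => α * rot θ * conj z + α

lemma lipschitzWith_psi (α : ℂ) (θ : ℝ) (b : Bool) : LipschitzWith ‖α‖₊ (psi α θ b) := by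
  refine LipschitzWith.of_dist_le_mul fun x y => le_of_eq ?_
  cases b
  · simp [psi, dist_eq_norm, ← mul_sub]
  · simp [psi, dist_eq_norm, ← mul_sub, ← map_sub, norm_rot]

lemma iUnion_image_psi (α : ℂ) (θ : ℝ) (K : Set ℂ) :
    ⋃ b, psi α θ b '' K =
      (fun z => α * z) '' K ∪ (fun z => α * rot θ * conj z + α) '' K := by
  ext x
  simp [psi, Bool.exists_bool]

lemma expansion_codeDigits {α : ℂ} (hα : ‖α‖ < 1) (c : ℕ → Bool) :
    expansion α (codeDigits θ c) =
      psi α θ (c 0) (expansion α (codeDigits θ fun n => c (n + 1))) := by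
  rw [expansion_eq_mul_tail hα (norm_codeDigits_le θ c) rfl]
  cases hc : c 0
  · rw [codeDigits_succ_of_false hc, psi]
  · set c' : ℕ → Bool := fun n => c (n + 1)
    have h1 : codeDigits θ c 1 = 1 := codeDigits_one_of_true hc
    rw [expansion_eq_add_mul_tail hα fun n => norm_codeDigits_le θ c _,
      xi_one_of_ne_zero (by rw [h1]; exact one_ne_zero),
      expansion_eq_mul_tail hα (norm_codeDigits_le θ c') rfl, h1]
    simp only [codeDigits_add_two_of_true hc]
    rw [expansion_const_mul (rot_ne_zero θ) _ fun n => conj (codeDigits θ c' (n + 1)),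
      expansion_conj, psi, map_mul]
    ring

end Code

section Main

variable {α : ℂ} {θ : ℝ} {p : ℕ} {δ : ℕ → ℂ}

lemma X3one_eq_range_codeDigits (hp : 0 < p) (hrp : rot θ ^ p = 1) :
    X3one α θ p = range fun c => expansion α (codeDigits θ c) := by
  ext x
  constructor
  · rintro ⟨δ, hw, hfn, rfl⟩
    exact ⟨_, congrArg (expansion α) ((altNormalForm_of_walt hw hfn).eq_codeDigits hw.1).symm⟩
  · rintro ⟨c, rfl⟩
    exact ⟨codeDigits θ c, walt_codeDigits hp hrp c,
      (altNormalForm_codeDigits θ c).firstNonzero_one rfl, rfl⟩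

lemma X3one_eq_attractor (hp : 0 < p) (hrp : rot θ ^ p = 1) (hα : ‖α‖ < 1) {K : Set ℂ}
    (hKne : K.Nonempty) (hKc : IsCompact K)
    (hK : K = (fun z => α * z) '' K ∪ (fun z => α * rot θ * conj z + α) '' K) :
    X3one α θ p = K := by
  rw [X3one_eq_range_codeDigits hp hrp]
  refine range_eq_of_coding (f := psi α θ) (by exact_mod_cast hα) (lipschitzWith_psi α θ)
    (by rwa [iUnion_image_psi]) hKc hKne (expansion_codeDigits hα) ?_
  refine isBounded_iff_forall_norm_le.2 ⟨(1 - ‖α‖)⁻¹, ?_⟩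
  rintro _ ⟨c, rfl⟩
  exact norm_expansion_le hα (norm_codeDigits_le θ c)

lemma Walt.rot_zpow_mul (hp : 0 < p) (hrp : rot θ ^ p = 1) (hw : Walt θ p δ) (m : ℤ) :
    Walt θ p fun n => rot θ ^ m * δ n := by
  have hu : rot θ ^ m ≠ 0 := zpow_ne_zero m (rot_ne_zero θ)
  have hz : ∀ n, rot θ ^ m * δ n = 0 ↔ δ n = 0 := fun n => by rw [mul_eq_zero, or_iff_right hu]
  obtain ⟨h0, hΔ, hac⟩ := hw
  refine ⟨by simp [h0], fun n => rot_zpow_mul_mem_Delta hp hrp m (hΔ n), ?_⟩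
  intro j k hjk hj hk hbet
  simp only at hj hk hbet ⊢
  rw [Ncount_congr hz, hac j k hjk (mt (hz j).2 hj) (mt (hz k).2 hk) fun m h₁ h₂ =>
    (hz m).1 (hbet m h₁ h₂)]
  ring

lemma FirstNonzero.const_mul {a : ℂ} (h : FirstNonzero δ a) (u : ℂ) :
    FirstNonzero (fun n => u * δ n) (u * a) := by
  rcases h with hall | ⟨j, hj, hbefore⟩
  · exact .inl fun n => by simp [hall n]
  · exact .inr ⟨j, by simp [hj], fun m hm => by simp [hbefore m hm]⟩

lemma Walt.exists_firstNonzero_rot_pow (hp : 0 < p) (hw : Walt θ p δ) :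
    ∃ k < p, FirstNonzero δ (rot θ ^ k) := by
  classical
  by_cases hex : ∃ n, δ n ≠ 0
  · rcases hw.2.1 (Nat.find hex) with h | ⟨k, hk, hkeq⟩
    · exact absurd h (Nat.find_spec hex)
    · exact ⟨k, hk, .inr ⟨Nat.find hex, hkeq, fun m hm => not_not.1 (Nat.find_min hex hm)⟩⟩
  · push Not at hex
    exact ⟨0, hp, .inl hex⟩

lemma X3full_eq_iUnion_image_X3one (hp : 0 < p) (hrp : rot θ ^ p = 1) :
    X3full α θ p = ⋃ k ∈ Finset.range p, (fun z => rot θ ^ k * z) '' X3one α θ p := by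
  ext x
  simp only [mem_iUnion, Finset.mem_range, mem_image]
  constructor
  · rintro ⟨δ, hw, rfl⟩
    obtain ⟨k, hk, hfn⟩ := hw.exists_firstNonzero_rot_pow hp
    have hinv : rot θ ^ (-(k : ℤ)) * rot θ ^ k = 1 := by
      rw [zpow_neg, zpow_natCast, inv_mul_cancel₀ (pow_ne_zero k (rot_ne_zero θ))]
    refine ⟨k, hk, _, ⟨_, hw.rot_zpow_mul hp hrp (-k), hinv ▸ hfn.const_mul _, rfl⟩, ?_⟩
    change rot θ ^ k * expansion α _ = expansion α δ
    rw [expansion_const_mul (zpow_ne_zero _ (rot_ne_zero θ)), ← mul_assoc, mul_comm (rot θ ^ k),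
      hinv, one_mul]
  · rintro ⟨k, -, _, ⟨δ, hw, -, rfl⟩, rfl⟩
    refine ⟨_, hw.rot_zpow_mul hp hrp k, ?_⟩
    change rot θ ^ k * expansion α δ = expansion α _
    rw [expansion_const_mul (zpow_ne_zero _ (rot_ne_zero θ)), zpow_natCast]

end Main

theorem X3full_eq_union_rot_attractor_general (α : ℂ) (θ : ℝ) (p : ℕ) (q : ℤ) (hp : 0 < p)
    (hθ : θ = 2 * Real.pi * (q : ℝ) / (p : ℝ)) (hα : ‖α‖ < 1)
    (K : Set ℂ) (hKne : K.Nonempty) (hKc : IsCompact K)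
    (hK : K = (fun z => α * z) '' K ∪
              (fun z => α * rot θ * starRingEnd ℂ z + α) '' K) :
    X3full α θ p = ⋃ k ∈ Finset.range p, (fun z => rot θ ^ k * z) '' K := by
  have hrp : rot θ ^ p = 1 := rot_pow_eq_one hp hθ
  rw [X3full_eq_iUnion_image_X3one hp hrp, X3one_eq_attractor hp hrp hα hKne hKc hK]

/-- X³_{α,θ} = ⋃_{k=0}^{p-1} (e^{iθ})^k K³_{α,θ}. -/
theorem X3full_eq_union_rot_attractor (α : ℂ) (θ : ℝ) (p : ℕ) (q : ℤ) (hp : 0 < p)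
    (hq : Nat.Coprime q.natAbs p)
    (hθ : θ = 2 * Real.pi * (q : ℝ) / (p : ℝ)) (hα0 : 0 < ‖α‖) (hα : ‖α‖ < 1)
    (K : Set ℂ) (hKne : K.Nonempty) (hKc : IsCompact K)
    (hK : K = (fun z => α * z) '' K ∪
              (fun z => α * rot θ * starRingEnd ℂ z + α) '' K) :
    X3full α θ p = ⋃ k ∈ Finset.range p, (fun z => rot θ ^ k * z) '' K :=
  X3full_eq_union_rot_attractor_general α θ p q hp hθ hα K hKne hKc hK
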